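/- Let ℵ_α = 𝔡. If ℵ_{α+ω} < 𝔠, then there is a cardinal κ < 𝔠 (namely κ = ℵ_{α+ω}) such that cof(Fin(κ)^ℕ) > 𝔡 · κ. -/

import Mathlib

/-! Put `κ = ℵ_{α+ω}`. Since `𝔡 = ℵ_α ≤ κ`, `𝔡 · κ = κ`. Because `cf κ = ω`, a family `T` of at
most `κ` functions `ℕ → Fin(κ)` splits into countably many pieces `Tₙ` of size `< κ`; as `κ` is
uncountable, the values of the members of `Tₙ` cover fewer than `κ` points, so choosing `xₙ`
outside them gives a function `n ↦ {xₙ}` bounded by no member of `T` (König's diagonal argument).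
Hence every cofinal family has more than `κ` elements. -/

open Set Filter

universe u

/-- Least cardinality of a cofinal subset of a preorder. -/
noncomputable def poCof (α : Type u) [Preorder α] : Cardinal.{u} :=
  sInf { c | ∃ S : Set α, (∀ a : α, ∃ b ∈ S, a ≤ b) ∧ Cardinal.mk S = c }

/-- `cof([X]^ℵ₀)`: cofinality of the family of countably infinite subsets of `X`,
ordered by inclusion. -/
noncomputable def ctblCof (X : Type u) : Cardinal.{u} :=
  poCof { A : Set X // A.Countable ∧ A.Infinite }

/-- The dominating number 𝔡. -/
noncomputable def dNum : Cardinal :=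
  sInf { c | ∃ D : Set (ℕ → ℕ),
    (∀ f : ℕ → ℕ, ∃ g ∈ D, ∀ᶠ n in atTop, f n ≤ g n) ∧ Cardinal.mk D = c }

/-- The unbounding number 𝔟. -/
noncomputable def bNum : Cardinal :=
  sInf { c | ∃ B : Set (ℕ → ℕ),
    (∀ g : ℕ → ℕ, ∃ f ∈ B, ¬ ∀ᶠ n in atTop, f n ≤ g n) ∧ Cardinal.mk B = c }

/-- An almost disjoint family on ℕ. -/
def AlmostDisjoint (𝒜 : Set (Set ℕ)) : Prop :=
  (∀ A ∈ 𝒜, A.Infinite) ∧ ∀ A ∈ 𝒜, ∀ B ∈ 𝒜, A ≠ B → (A ∩ B).Finite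

/-- The underlying set of the Isbell–Mrówka space `Ψ(𝒜) = ℕ ∪ 𝒜`. -/
abbrev PsiSpace (𝒜 : Set (Set ℕ)) : Type := ℕ ⊕ ↥𝒜

/-- The Isbell–Mrówka topology: naturals are isolated, and basic neighborhoods
of `A ∈ 𝒜` are `{A} ∪ (A \ F)` for finite `F`. -/
instance psiTop (𝒜 : Set (Set ℕ)) : TopologicalSpace (PsiSpace 𝒜) where
  IsOpen U := ∀ A : 𝒜, Sum.inr A ∈ U → { n : ℕ | n ∈ (A : Set ℕ) ∧ Sum.inl n ∉ U }.Finite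
  isOpen_univ := by
    intro A _
    convert Set.finite_empty using 1
    ext n; simp
  isOpen_inter := by
    intro U V hU hV A hA
    apply ((hU A hA.1).union (hV A hA.2)).subset
    rintro n ⟨h1, h2⟩
    by_cases h : Sum.inl n ∈ U
    · exact Or.inr ⟨h1, fun hv => h2 ⟨h, hv⟩⟩
    · exact Or.inl ⟨h1, h⟩
  isOpen_sUnion := by
    intro s hs A hA
    obtain ⟨t, ht, hAt⟩ := hA
    apply (hs t ht A hAt).subset
    rintro n ⟨h1, h2⟩
    exact ⟨h1, fun h => h2 ⟨t, ht, h⟩⟩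

/-- `st(S, 𝒰) = ⋃ {U ∈ 𝒰 : U ∩ S ≠ ∅}`. -/
def starSet {X : Type*} (S : Set X) (𝒰 : Set (Set X)) : Set X :=
  ⋃₀ { U ∈ 𝒰 | (U ∩ S).Nonempty }

def StarMenger (X : Type*) [TopologicalSpace X] : Prop :=
  ∀ 𝒰 : ℕ → Set (Set X), (∀ n, ∀ U ∈ 𝒰 n, IsOpen U) → (∀ n, ⋃₀ 𝒰 n = univ) →
    ∃ ℱ : ℕ → Set (Set X), (∀ n, ℱ n ⊆ 𝒰 n ∧ (ℱ n).Finite) ∧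
      (⋃ n, starSet (⋃₀ ℱ n) (𝒰 n)) = univ

def StarHurewicz (X : Type*) [TopologicalSpace X] : Prop :=
  ∀ 𝒰 : ℕ → Set (Set X), (∀ n, ∀ U ∈ 𝒰 n, IsOpen U) → (∀ n, ⋃₀ 𝒰 n = univ) →
    ∃ ℱ : ℕ → Set (Set X), (∀ n, ℱ n ⊆ 𝒰 n ∧ (ℱ n).Finite) ∧
      ∀ x : X, ∀ᶠ n in atTop, x ∈ starSet (⋃₀ ℱ n) (𝒰 n)

def StarRothberger (X : Type*) [TopologicalSpace X] : Prop :=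
  ∀ 𝒰 : ℕ → Set (Set X), (∀ n, ∀ U ∈ 𝒰 n, IsOpen U) → (∀ n, ⋃₀ 𝒰 n = univ) →
    ∃ U : ℕ → Set X, (∀ n, U n ∈ 𝒰 n) ∧ (⋃ n, starSet (U n) (𝒰 n)) = univ

def StronglyStarMenger (X : Type*) [TopologicalSpace X] : Prop :=
  ∀ 𝒰 : ℕ → Set (Set X), (∀ n, ∀ U ∈ 𝒰 n, IsOpen U) → (∀ n, ⋃₀ 𝒰 n = univ) →
    ∃ F : ℕ → Set X, (∀ n, (F n).Finite) ∧ (⋃ n, starSet (F n) (𝒰 n)) = univ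

def StronglyStarHurewicz (X : Type*) [TopologicalSpace X] : Prop :=
  ∀ 𝒰 : ℕ → Set (Set X), (∀ n, ∀ U ∈ 𝒰 n, IsOpen U) → (∀ n, ⋃₀ 𝒰 n = univ) →
    ∃ F : ℕ → Set X, (∀ n, (F n).Finite) ∧
      ∀ x : X, ∀ᶠ n in atTop, x ∈ starSet (F n) (𝒰 n)

open Cardinal

theorem poCof_eq_cof (P : Type u) [Preorder P] : poCof P = Order.cof P := by
  refine le_antisymm ?_ (le_csInf ⟨_, univ, fun a => ⟨a, mem_univ a, le_rfl⟩, rfl⟩ ?_)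
  · obtain ⟨S, hS, hSmk⟩ := Order.exists_cof_eq P
    exact csInf_le' ⟨S, hS, hSmk⟩
  · rintro _ ⟨S, hS, rfl⟩
    exact Order.cof_le hS

/-- The pieces are the preimages of the initial segments of `κ.ord` below the points of a
countable cofinal subset. -/
theorem exists_countable_cover_mk_lt_of_cof_eq_aleph0 {Y : Type u} {κ : Cardinal.{u}}
    (hκ : κ.ord.cof = ℵ₀) {s : Set Y} (hs : #s ≤ κ) :
    ∃ A : ℕ → Set Y, s ⊆ ⋃ n, A n ∧ ∀ n, #(A n) < κ := by
  have hκ_inf : ℵ₀ ≤ κ := hκ ▸ Ordinal.cof_ord_le κ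
  obtain ⟨S, hS_cofinal, hS_mk⟩ := Order.exists_cof_eq κ.ord.ToType
  rw [Ordinal.cof_toType, hκ] at hS_mk
  have hS_ne : S.Nonempty := mk_set_ne_zero_iff.1 (hS_mk ▸ aleph0_ne_zero)
  obtain ⟨b, hb⟩ :=
    (Set.countable_iff_exists_surjective hS_ne).1 (le_aleph0_iff_set_countable.1 hS_mk.le)
  have hmk : #κ.ord.ToType = κ := by rw [mk_toType, card_ord]
  have hIio (i : κ.ord.ToType) : #(Iio i) < κ :=
    (mk_Iio_lt i (by rw [hmk, Ordinal.type_toType])).trans_eq hmk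
  obtain ⟨ι⟩ : Nonempty (s ↪ κ.ord.ToType) := by rwa [← Cardinal.le_def, hmk]
  refine ⟨fun n => Subtype.val '' (ι ⁻¹' Iic (b n : κ.ord.ToType)), ?_, fun n => ?_⟩
  · intro y hy
    obtain ⟨c, hcS, hc⟩ := hS_cofinal (ι ⟨y, hy⟩)
    obtain ⟨n, hn⟩ := hb ⟨c, hcS⟩
    exact mem_iUnion.2 ⟨n, ⟨y, hy⟩, by simpa [hn] using hc, rfl⟩
  · calc #(Subtype.val '' (ι ⁻¹' Iic (b n : κ.ord.ToType)))
        ≤ #(Iic (b n : κ.ord.ToType)) :=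
          mk_image_le.trans (mk_preimage_of_injective ι _ ι.injective)
      _ = #(insert (b n : κ.ord.ToType) (Iio (b n : κ.ord.ToType)) : Set _) := by rw [Iio_insert]
      _ < κ := mk_insert_le.trans_lt
          (add_lt_of_lt hκ_inf (hIio _) (one_lt_aleph0.trans_le hκ_inf))

section FinsetValued

variable {X : Type u}

theorem mk_biUnion_finsetFun_lt (hX : ℵ₀ < #X) {A : Set (ℕ → Finset X)} (hA : #A < #X) :
    #(⋃ t ∈ A, ⋃ m, (t m : Set X)) < #X := by
  refine (mk_biUnion_le _ _).trans_lt (mul_lt_of_lt hX.le hA ?_)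
  refine (ciSup_le' fun t => ?_).trans_lt hX
  exact le_aleph0_iff_set_countable.2 (countable_iUnion fun m => (t.1 m).finite_toSet.countable)

theorem exists_forall_not_le_of_mk_lt (hX : ℵ₀ < #X) {A : ℕ → Set (ℕ → Finset X)}
    (hA : ∀ n, #(A n) < #X) : ∃ d : ℕ → Finset X, ∀ n, ∀ t ∈ A n, ¬ d ≤ t := by
  have hx : ∀ n, ∃ x, x ∉ ⋃ t ∈ A n, ⋃ m, (t m : Set X) := fun n => by
    by_contra! h
    exact (mk_biUnion_finsetFun_lt hX (hA n)).ne (by rw [eq_univ_of_forall h, mk_univ])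
  choose x hx using hx
  refine ⟨fun n => {x n}, fun n t ht hle => hx n ?_⟩
  exact mem_biUnion ht (mem_iUnion.2 ⟨n, Finset.singleton_subset_iff.1 (hle n)⟩)

theorem mk_lt_mk_of_isCofinal (hX : ℵ₀ < #X) (hcof : (#X).ord.cof = ℵ₀)
    {T : Set (ℕ → Finset X)} (hT : IsCofinal T) : #X < #T := by
  by_contra! hTX
  obtain ⟨A, hTA, hA⟩ := exists_countable_cover_mk_lt_of_cof_eq_aleph0 hcof hTX
  obtain ⟨d, hd⟩ := exists_forall_not_le_of_mk_lt hX hA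
  obtain ⟨t, htT, hdt⟩ := hT d
  obtain ⟨n, htn⟩ := mem_iUnion.1 (hTA htT)
  exact hd n t htn hdt

theorem mk_lt_cof_finsetFun (hX : ℵ₀ < #X) (hcof : (#X).ord.cof = ℵ₀) :
    #X < Order.cof (ℕ → Finset X) := by
  obtain ⟨T, hT, hT_mk⟩ := Order.exists_cof_eq (ℕ → Finset X)
  exact hT_mk ▸ mk_lt_mk_of_isCofinal hX hcof hT

end FinsetValued

/-- if `ℵ_α = 𝔡` and `ℵ_{α+ω} < 𝔠`, then there is `κ < 𝔠`
(namely `κ = ℵ_{α+ω}`) with `cof(Fin(κ)^ℕ) > 𝔡·κ`. -/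
theorem exists_cof_finFun_gt (α : Ordinal.{0}) (hα : Cardinal.aleph α = dNum)
    (h : Cardinal.aleph (α + Ordinal.omega0) < Cardinal.continuum) :
    ∃ κ : Cardinal.{0}, κ = Cardinal.aleph (α + Ordinal.omega0) ∧
      κ < Cardinal.continuum ∧
      dNum * κ < poCof (ℕ → Finset (Quotient.out κ)) := by
  refine ⟨_, rfl, h, ?_⟩
  set κ := aleph (α + Ordinal.omega0)
  have hκ_uncountable : ℵ₀ < κ := by
    rw [← aleph_zero, aleph_lt_aleph]
    exact Ordinal.omega0_pos.trans_le le_add_self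
  have hκ_cof : κ.ord.cof = ℵ₀ := by
    rw [ord_aleph, Ordinal.cof_omega (Ordinal.isSuccLimit_add α Ordinal.isSuccLimit_omega0),
      Ordinal.cof_add _ Ordinal.omega0_ne_zero, Ordinal.cof_omega0]
  have hdκ : dNum * κ = κ := by
    rw [← hα]
    exact Cardinal.mul_eq_right hκ_uncountable.le (aleph_le_aleph.2 le_self_add)
      (aleph_pos α).ne'
  rw [hdκ, poCof_eq_cof]
  conv_lhs => rw [← mk_out κ]
  exact mk_lt_cof_finsetFun (by rwa [mk_out]) (by rwa [mk_out])
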